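/- For q ≠ 0, the profit intensity ρ(a) := (-∫_{-∞}^{-a} p·pdf(p) dp) / (1 + ∫_{-∞}^{-a} pdf(p) dp), with pdf(p) = e^{-p²}(2p² + 2q² - 1)/(2√π q²), has the closed form ρ(a) = (e^{-a²}(2a² + 2q² + 1)) / (4√π q² + 2a·e^{-a²} + 2√π q²·erfc(a)). -/

import Mathlib

/-! Both integrals in `ρ` are elementary up to a Gaussian tail: `pdf q` is a combination of
`exp (-p^2)` and exact derivatives `(P e^{-p²})' = (P' - 2pP) e^{-p²}` of polynomial multiples
of the Gaussian, which vanish at `-∞`. -/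

noncomputable def erfc (a : ℝ) : ℝ :=
  (2 / Real.sqrt Real.pi) * ∫ t in Set.Ioi a, Real.exp (-t^2)

noncomputable def pdf (q p : ℝ) : ℝ :=
  Real.exp (-p^2) * (2*p^2 + 2*q^2 - 1) / (2 * Real.sqrt Real.pi * q^2)

noncomputable def ρ (q a : ℝ) : ℝ :=
  (-∫ p in Set.Iic (-a), p * pdf q p) / (1 + ∫ p in Set.Iic (-a), pdf q p)

open MeasureTheory hiding pdf
open Real Set Filter Topology Polynomial

lemma integrable_pow_mul_exp_neg_sq (n : ℕ) : Integrable fun x : ℝ ↦ x ^ n * exp (-x ^ 2) := by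
  simpa [rpow_natCast] using integrable_rpow_mul_exp_neg_mul_sq (b := 1) one_pos (s := n)
    (by linarith [n.cast_nonneg (α := ℝ)])

lemma tendsto_pow_mul_exp_neg_sq_atBot (n : ℕ) :
    Tendsto (fun x : ℝ ↦ x ^ n * exp (-x ^ 2)) atBot (𝓝 0) := by
  refine squeeze_zero_norm (fun x ↦ ?_) ((tendsto_rpow_abs_mul_exp_neg_mul_sq_cocompact one_pos
    n).mono_left atBot_le_cocompact)
  simp

lemma integrable_eval_mul_exp_neg_sq (P : ℝ[X]) :
    Integrable fun x : ℝ ↦ P.eval x * exp (-x ^ 2) := by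
  induction P using Polynomial.induction_on' with
  | add P Q hP hQ => simp only [eval_add, add_mul]; exact hP.add hQ
  | monomial n c => simpa [mul_assoc] using (integrable_pow_mul_exp_neg_sq n).const_mul c

lemma tendsto_eval_mul_exp_neg_sq_atBot (P : ℝ[X]) :
    Tendsto (fun x : ℝ ↦ P.eval x * exp (-x ^ 2)) atBot (𝓝 0) := by
  induction P using Polynomial.induction_on' with
  | add P Q hP hQ => simpa [add_mul] using hP.add hQ
  | monomial n c => simpa [mul_assoc] using (tendsto_pow_mul_exp_neg_sq_atBot n).const_mul c

lemma hasDerivAt_eval_mul_exp_neg_sq (P : ℝ[X]) (x : ℝ) :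
    HasDerivAt (fun x : ℝ ↦ P.eval x * exp (-x ^ 2))
      ((P.derivative.eval x - 2 * x * P.eval x) * exp (-x ^ 2)) x := by
  have hexp : HasDerivAt (fun x : ℝ ↦ exp (-x ^ 2)) (exp (-x ^ 2) * -(2 * x)) x := by
    simpa using (hasDerivAt_pow 2 x).neg.exp
  exact ((P.hasDerivAt x).fun_mul hexp).congr_deriv (by ring)

lemma integrable_derivative_eval_sub_mul_exp_neg_sq (P : ℝ[X]) :
    Integrable fun x : ℝ ↦ (P.derivative.eval x - 2 * x * P.eval x) * exp (-x ^ 2) := by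
  have h := integrable_eval_mul_exp_neg_sq (derivative P - C 2 * X * P)
  simp only [eval_sub, eval_mul, eval_C, eval_X] at h
  exact h

lemma integral_Iic_eval_mul_exp_neg_sq (P : ℝ[X]) (b : ℝ) :
    ∫ x in Iic b, (P.derivative.eval x - 2 * x * P.eval x) * exp (-x ^ 2)
      = P.eval b * exp (-b ^ 2) := by
  simpa using integral_Iic_of_hasDerivAt_of_tendsto'
    (fun x _ ↦ hasDerivAt_eval_mul_exp_neg_sq P x)
    (integrable_derivative_eval_sub_mul_exp_neg_sq P).integrableOn
    (tendsto_eval_mul_exp_neg_sq_atBot P)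

lemma integral_Iic_neg_exp_neg_sq (a : ℝ) :
    ∫ p in Iic (-a), exp (-p ^ 2) = √π / 2 * erfc a := by
  rw [erfc, ← integral_comp_neg_Ioi]
  field_simp

lemma integral_Iic_mul_pdf (q a : ℝ) :
    ∫ p in Iic (-a), p * pdf q p
      = -(exp (-a ^ 2) * (2 * a ^ 2 + 2 * q ^ 2 + 1) / (4 * √π * q ^ 2)) := by
  set P : ℝ[X] := -(X ^ 2 + C (q ^ 2 + 1 / 2))
  have hpdf : ∀ p, p * pdf q p
      = (P.derivative.eval p - 2 * p * P.eval p) * exp (-p ^ 2) / (2 * √π * q ^ 2) := by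
    intro p
    simp only [P, pdf, derivative_neg, derivative_add, derivative_X_pow, derivative_C,
      eval_neg, eval_add, eval_mul, eval_pow, eval_C, eval_X, eval_zero]
    push_cast
    ring
  simp_rw [hpdf, integral_div, integral_Iic_eval_mul_exp_neg_sq]
  simp only [P, eval_neg, eval_add, eval_pow, eval_C, eval_X, even_two, Even.neg_pow]
  ring

lemma integral_Iic_pdf (q a : ℝ) :
    ∫ p in Iic (-a), pdf q p
      = (a * exp (-a ^ 2) + q ^ 2 * √π * erfc a) / (2 * √π * q ^ 2) := by
  have hpdf : ∀ p, pdf q p = ((derivative (-X)).eval p - 2 * p * (-X).eval p)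
      * exp (-p ^ 2) / (2 * √π * q ^ 2) + 2 * q ^ 2 * exp (-p ^ 2) / (2 * √π * q ^ 2) := by
    intro p
    simp only [pdf, derivative_neg, derivative_X, eval_neg, eval_one, eval_X]
    ring
  have hgauss : Integrable fun p : ℝ ↦ exp (-p ^ 2) := by
    simpa using integrable_pow_mul_exp_neg_sq 0
  simp_rw [hpdf]
  rw [integral_add ((integrable_derivative_eval_sub_mul_exp_neg_sq _).div_const _).integrableOn
    ((hgauss.const_mul _).div_const _).integrableOn, integral_div, integral_div,
    integral_Iic_eval_mul_exp_neg_sq, integral_const_mul, integral_Iic_neg_exp_neg_sq]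
  simp only [eval_neg, eval_X, neg_neg, even_two, Even.neg_pow]
  ring

theorem stmt_9 (q : ℝ) (hq : q ≠ 0) (a : ℝ) :
    ρ q a = (Real.exp (-a^2) * (2*a^2 + 2*q^2 + 1)) /
      (4 * Real.sqrt Real.pi * q^2 + 2*a*Real.exp (-a^2)
        + 2 * Real.sqrt Real.pi * q^2 * erfc a) := by
  have hc : 4 * √π * q ^ 2 ≠ 0 := by positivity
  have hden : 1 + (a * exp (-a ^ 2) + q ^ 2 * √π * erfc a) / (2 * √π * q ^ 2)
      = (4 * √π * q ^ 2 + 2 * a * exp (-a ^ 2) + 2 * √π * q ^ 2 * erfc a) / (4 * √π * q ^ 2) := by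
    field_simp
    ring
  rw [ρ, integral_Iic_mul_pdf, neg_neg, integral_Iic_pdf, hden, div_div_div_cancel_right₀ hc]
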